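/- arXiv:2604.25294 — 2 statements merged into one kernel-verified Lean document; each statement's English description precedes it below -/
import Mathlib

section
/- Let u and v be distinct binary sequences of the same length, let d_H = d_H(u,v) ≥ 2, and let j_1 < … < j_{d_H} be the positions where they differ. Then for any 1 ≤ i < i' ≤ d_H: if d_H(u_{[j_i+1, j_{i'}]}, v_{[j_i, j_{i'}-1]}) = 0, then d_H(u_{[j_i, j_{i'}-1]}, v_{[j_i+1, j_{i'}]}) is even (and ≥ 0); and symmetrically, if d_H(u_{[j_i, j_{i'}-1]}, v_{[j_i+1, j_{i'}]}) = 0, then d_H(u_{[j_i+1, j_{i'}]}, v_{[j_i, j_{i'}-1]}) is even. -/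
/-- Hamming distance between two lists of equal length (compared entrywise). -/
def dHL (u v : List Bool) : ℕ :=
  ((Finset.range u.length).filter (fun i => u.getD i false ≠ v.getD i false)).card

open Finset

private def gB (t : Bool) : ZMod 2 := if t then 1 else 0

private lemma telescope (b : ℕ → ZMod 2) (m : ℕ) :
    ∑ i ∈ range m, (b i + b (i+2)) = b 0 + b 1 + b m + b (m+1) := by
  have h2 : (2 : ZMod 2) = 0 := rfl
  induction m with
  | zero => simp; linear_combination (-(b 0) - b 1) * h2
  | succ m ih =>
      rw [sum_range_succ, ih]
      linear_combination (b m) * h2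

private lemma key (b c : ℕ → Bool) (m : ℕ) (hm : 0 < m)
    (hbc : ∀ i < m, b (i+1) = c i)
    (h0 : b 0 ≠ c 0) (hmm : b m ≠ c m) :
    Even ((range m).filter (fun i => b i ≠ c (i+1))).card := by
  rw [even_iff_two_dvd, ← ZMod.natCast_eq_zero_iff]
  rw [Finset.card_filter]
  push_cast
  have hterm : ∀ i, (if b i ≠ c (i+1) then (1 : ZMod 2) else 0) = gB (b i) + gB (c (i+1)) := by
    intro i
    cases hb : b i <;> cases hc : c (i+1) <;> simp [gB] <;> decide
  simp only [hterm]
  obtain ⟨k, rfl⟩ : ∃ k, m = k + 1 := ⟨m - 1, (Nat.succ_pred_eq_of_pos hm).symm⟩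
  rw [sum_range_succ]
  have hcong : ∑ i ∈ range k, (gB (b i) + gB (c (i+1)))
      = ∑ i ∈ range k, (gB (b i) + gB (b (i+2))) := by
    apply sum_congr rfl
    intro i hi
    rw [mem_range] at hi
    rw [hbc (i+1) (by omega)]
  rw [hcong, telescope (fun i => gB (b i)) k]
  have hb1 : b 1 = c 0 := hbc 0 hm
  cases hB0 : b 0 <;> cases hC0 : c 0 <;> cases hBk : b k <;>
    cases hBk1 : b (k+1) <;> cases hCk1 : c (k+1) <;>
    simp_all [gB] <;> decide

private lemma getD_drop_take (l : List Bool) (a m i : ℕ) (hi : i < m) :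
    ((l.drop a).take m).getD i false = l.getD (a + i) false := by
  simp [List.getD_eq_getElem?_getD, List.getElem?_take_of_lt hi, List.getElem?_drop]

private lemma dHL_take_drop (u v : List Bool) (a b m : ℕ) (hu : a + m ≤ u.length) :
    dHL ((u.drop a).take m) ((v.drop b).take m)
      = ((range m).filter (fun i => u.getD (a+i) false ≠ v.getD (b+i) false)).card := by
  unfold dHL
  have hlen : ((u.drop a).take m).length = m := by
    simp; omega
  rw [hlen]
  congr 1
  apply Finset.filter_congr
  intro i hi
  rw [Finset.mem_range] at hi
  rw [getD_drop_take u a m i hi, getD_drop_take v b m i hi]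

private lemma one_dir (n : ℕ) (u v : List Bool) (hu : u.length = n) (hv : v.length = n)
    (p q : ℕ) (hpq : p < q) (hqn : q < n)
    (hp : u.getD p false ≠ v.getD p false)
    (hq : u.getD q false ≠ v.getD q false)
    (h : dHL ((u.drop (p + 1)).take (q - p)) ((v.drop p).take (q - p)) = 0) :
    Even (dHL ((u.drop p).take (q - p)) ((v.drop (p + 1)).take (q - p))) := by
  set m := q - p with hm
  have hm0 : 0 < m := by omega
  have hu1 : p + 1 + m ≤ u.length := by omega
  have hu2 : p + m ≤ u.length := by omega
  rw [dHL_take_drop u v (p+1) p m hu1] at h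
  rw [dHL_take_drop u v p (p+1) m hu2]
  have hmatch : ∀ i < m, u.getD (p + 1 + i) false = v.getD (p + i) false := by
    intro i hi
    by_contra hne
    have hmem : i ∈ (range m).filter
        (fun i => u.getD (p+1+i) false ≠ v.getD (p+i) false) :=
      Finset.mem_filter.mpr ⟨Finset.mem_range.mpr hi, hne⟩
    rw [Finset.card_eq_zero] at h
    rw [h] at hmem
    exact absurd hmem (Finset.notMem_empty i)
  have := key (fun i => u.getD (p + i) false) (fun i => v.getD (p + i) false) m hm0
    (fun i hi => by simpa [show p + (i+1) = p + 1 + i by omega] using hmatch i hi)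
    (by simpa using hp)
    (by simpa [show p + m = q by omega] using hq)
  convert this using 2
  ext i
  simp only [Finset.mem_filter, Finset.mem_range]
  constructor <;> rintro ⟨hi, hne⟩ <;>
    exact ⟨hi, by simpa [show p + 1 + i = p + (i+1) by omega] using hne⟩

private lemma dHL_comm (a b : List Bool) (h : a.length = b.length) : dHL a b = dHL b a := by
  unfold dHL
  rw [h]
  congr 1
  apply Finset.filter_congr
  intro i _
  simp [ne_comm]

/-- For distinct equal-length `u, v` and (0-indexed) disagreement positions `p < q`:
if `d_H(u_{[p+1,q]}, v_{[p,q-1]}) = 0` then `d_H(u_{[p,q-1]}, v_{[p+1,q]})` is even,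
and symmetrically (here substrings are expressed via `drop`/`take`). -/
theorem stmt8 (n : ℕ) (u v : List Bool) (hu : u.length = n) (hv : v.length = n)
    (p q : ℕ) (hpq : p < q) (hqn : q < n)
    (hp : u.getD p false ≠ v.getD p false)
    (hq : u.getD q false ≠ v.getD q false) :
    (dHL ((u.drop (p + 1)).take (q - p)) ((v.drop p).take (q - p)) = 0 →
      Even (dHL ((u.drop p).take (q - p)) ((v.drop (p + 1)).take (q - p)))) ∧
    (dHL ((u.drop p).take (q - p)) ((v.drop (p + 1)).take (q - p)) = 0 →
      Even (dHL ((u.drop (p + 1)).take (q - p)) ((v.drop p).take (q - p)))) := by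
  have hlen1 : ((u.drop p).take (q - p)).length = ((v.drop (p+1)).take (q - p)).length := by
    simp; omega
  have hlen2 : ((v.drop (p+1)).take (q - p)).length = ((u.drop p).take (q - p)).length :=
    hlen1.symm
  constructor
  · exact one_dir n u v hu hv p q hpq hqn hp hq
  · intro h
    have h' : dHL ((v.drop (p + 1)).take (q - p)) ((u.drop p).take (q - p)) = 0 := by
      rw [dHL_comm _ _ hlen2]; exact h
    have := one_dir n v u hv hu p q hpq hqn (Ne.symm hp) (Ne.symm hq) h'
    rwa [dHL_comm ((v.drop p).take (q - p)) ((u.drop (p+1)).take (q - p)) (by simp; omega)]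
      at this
end

section
/- Fix s_0 ∈ [0,3], s_1 ∈ [0, 2n-1], s_2 ∈ [0, 2n^2 - 1], and define C_L = {x ∈ {0,1}^n : wt(x) ≡ s_0 (mod 4), Σ_i i·x_i ≡ s_1 (mod 2n), Σ_i i^2·x_i' ≡ s_2 (mod 2n^2)} to be the single-deletion single-substitution list-size-two code of Song et al. (here the second-order VT syndrome VT^2(x) = Σ_{i=1}^n Σ_{j=1}^i j·x_i). If x, y ∈ C_L are distinct and x(d_x, e_x) = y(d_y, e_y) for some deletion positions d_x, d_y and substitution positions e_x, e_y, then both e_x and e_y lie in the interval between d_x and d_y, i.e., e_x, e_y ∈ [min(d_x,d_y), max(d_x,d_y)]. -/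
/-- First-order VT syndrome `Σ_{i=1}^n i·x_i` (lists being 0-indexed). -/
def vtSyn (x : List Bool) : ℕ :=
  (Finset.range x.length).sum (fun i => (i + 1) * (if x.getD i false then 1 else 0))

/-- Second-order VT syndrome `VT²(x) = Σ_{i=1}^n Σ_{j=1}^i j · x_i = Σ_i (i(i+1)/2)·x_i`. -/
def vtSyn2 (x : List Bool) : ℕ :=
  (Finset.range x.length).sum
    (fun i => ((i + 1) * (i + 2) / 2) * (if x.getD i false then 1 else 0))

/-- `x(d,e)`: the result of substituting position `e` (flipping it) and deleting
position `d` in `x` (0-indexed; the order of the two operations is immaterial). -/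
def delSub (x : List Bool) (d e : ℕ) : List Bool :=
  (x.set e (!(x.getD e false))).eraseIdx d

/-!
Write `x' = flipAt x e_x`, `y' = flipAt y e_y`, so that both are obtained from the common word
`z = x(d_x, e_x) = y(d_y, e_y)` by inserting one bit. For any weights `w`, the difference of the
syndromes `Σ w_i x_i` of `y` and `x` is then the effect of the two substitutions plus a sum over
`d_x ≤ j < d_y` weighted by `w (j+1) - w j`. The weight modulo 4 forces both substitutions to flip
the same kind of bit and both insertions to insert the same bit `a`. The first-order syndrome
modulo `2n` and the doubled second-order one modulo `4n²` then give exact equalities, because both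
sides are small. They say that the bits of `z` on `[d_x, d_y)` that differ from `a` are
`|e_x - e_y|` in number and have the same index sum as the block between `e_x` and `e_y`. Among
sets of that size in `[d_x, d_y)`, the index sum is smallest for the lowest block and largest for
the highest one, so the block between `e_x` and `e_y` lies in `[d_x, d_y]`. If `e_x = e_y` instead,
`z` equals `a` on `[d_x, d_y)`, which forces `x = y`.
-/

open Finset

theorem List.getD_eraseIdx {α : Type*} (l : List α) (d j : ℕ) (v : α) :
    (l.eraseIdx d).getD j v = if j < d then l.getD j v else l.getD (j + 1) v := by
  simp only [List.getD_eq_getElem?_getD, List.getElem?_eraseIdx]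
  split_ifs <;> rfl

theorem List.eq_of_eraseIdx_eq {α : Type*} {l m : List α} {d d' : ℕ} (v : α)
    (hlen : l.length = m.length) (hdd : d ≤ d') (h : l.eraseIdx d = m.eraseIdx d')
    (hrun : ∀ i, d ≤ i → i ≤ d' → l.getD i v = m.getD d' v) : l = m := by
  have hget (j : ℕ) := congrArg (List.getD · j v) h
  simp only [List.getD_eraseIdx] at hget
  have key (i : ℕ) : l.getD i v = m.getD i v := by
    rcases lt_or_ge i d with hi | hi
    · simpa [hi, hi.trans_le hdd] using hget i
    rcases lt_trichotomy i d' with hi' | rfl | hi'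
    · have := hget i
      simp only [not_lt.2 hi, hi', if_true, if_false] at this
      rw [hrun i hi hi'.le, ← hrun (i + 1) (by omega) hi', this]
    · exact hrun i hi le_rfl
    · have := hget (i - 1)
      simpa [show ¬ i - 1 < d by omega, show ¬ i - 1 < d' by omega,
        Nat.sub_add_cancel (show 1 ≤ i by omega)] using this
  refine List.ext_getElem hlen fun i h₁ h₂ => ?_
  rw [← List.getD_eq_getElem _ v h₁, ← List.getD_eq_getElem _ v h₂, key]

def flipAt (l : List Bool) (e : ℕ) : List Bool := l.set e (!l.getD e false)

theorem flipAt_flipAt (l : List Bool) (e : ℕ) : flipAt (flipAt l e) e = l := by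
  unfold flipAt
  rcases lt_or_ge e l.length with he | he
  · rw [List.set_set, List.getD_eq_getElem _ _ (by simpa using he), List.getElem_set_self,
      Bool.not_not, List.getD_eq_getElem _ false he, List.set_getElem_self]
  · rw [List.set_eq_of_length_le he, List.set_eq_of_length_le he]

theorem flipAt_injective (e : ℕ) : Function.Injective (flipAt · e) :=
  Function.LeftInverse.injective (g := (flipAt · e)) fun l => flipAt_flipAt l e

theorem eraseIdx_flipAt (x : List Bool) (d e : ℕ) : (flipAt x e).eraseIdx d = delSub x d e := rfl

def bit (l : List Bool) (i : ℕ) : ℤ := if l.getD i false then 1 else 0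

theorem bit_eq_zero_or_one (l : List Bool) (i : ℕ) : bit l i = 0 ∨ bit l i = 1 := by
  unfold bit; split_ifs <;> simp

theorem bit_eq_bit_iff {l m : List Bool} {i j : ℕ} :
    bit l i = bit m j ↔ l.getD i false = m.getD j false := by
  unfold bit; cases l.getD i false <;> cases m.getD j false <;> simp

theorem bit_eraseIdx (l : List Bool) (d j : ℕ) :
    bit (l.eraseIdx d) j = if j < d then bit l j else bit l (j + 1) := by
  unfold bit; rw [List.getD_eraseIdx]; split_ifs <;> rfl

theorem bit_flipAt {l : List Bool} {e : ℕ} (he : e < l.length) (i : ℕ) :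
    bit (flipAt l e) i = if i = e then 1 - bit l e else bit l i := by
  unfold bit flipAt
  simp only [List.getD_eq_getElem?_getD, List.getElem?_set]
  by_cases hi : i = e
  · subst hi; cases l[i]?.getD false <;> simp [he]
  · simp [Ne.symm hi, hi]

theorem eq_of_delSub_eq {x y : List Bool} {dx dy e : ℕ} (hlen : x.length = y.length)
    (hdd : dx ≤ dy) (heq : delSub x dx e = delSub y dy e)
    (hb : bit (flipAt x e) dx = bit (flipAt y e) dy)
    (hrun : ∀ j ∈ Ico dx dy, bit (delSub x dx e) j = bit (flipAt x e) dx) : x = y := by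
  apply flipAt_injective e
  refine List.eq_of_eraseIdx_eq false (by simp [flipAt, hlen]) hdd heq fun i hi hi' => ?_
  rw [← bit_eq_bit_iff, ← hb]
  rcases hi.eq_or_lt with rfl | hi
  · rfl
  · have := hrun (i - 1) (mem_Ico.2 ⟨by omega, by omega⟩)
    rwa [← eraseIdx_flipAt, bit_eraseIdx, if_neg (by omega), Nat.sub_add_cancel (by omega)] at this

def weightedWt (w : ℕ → ℤ) (l : List Bool) : ℤ := ∑ i ∈ range l.length, w i * bit l i

theorem sum_range_succ_eq_of_erase {R : Type*} [CommRing R] (w f g : ℕ → R) {d n : ℕ}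
    (hd : d ≤ n) (hg : ∀ j, g j = if j < d then f j else f (j + 1)) :
    ∑ i ∈ range (n + 1), w i * f i
      = ∑ j ∈ range n, w j * g j + w d * f d + ∑ j ∈ Ico d n, (w (j + 1) - w j) * g j := by
  induction n, hd using Nat.le_induction with
  | base =>
    rw [sum_range_succ, Ico_self, sum_empty, add_zero]
    congr 1
    exact sum_congr rfl fun j hj => by rw [hg, if_pos (mem_range.1 hj)]
  | succ n hdn ih =>
    have hgn : g n = f (n + 1) := by rw [hg, if_neg (by omega)]
    rw [sum_range_succ, ih, sum_range_succ, sum_Ico_succ_top hdn, hgn]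
    ring

theorem weightedWt_eq_eraseIdx (w : ℕ → ℤ) {l : List Bool} {d : ℕ} (hd : d < l.length) :
    weightedWt w l = weightedWt w (l.eraseIdx d) + w d * bit l d
      + ∑ j ∈ Ico d (l.length - 1), (w (j + 1) - w j) * bit (l.eraseIdx d) j := by
  have hlen : l.length = l.length - 1 + 1 := by omega
  rw [weightedWt, weightedWt, List.length_eraseIdx_of_lt hd, hlen,
    sum_range_succ_eq_of_erase w (bit l) _ (by omega) (bit_eraseIdx l d), ← hlen]

theorem weightedWt_flipAt (w : ℕ → ℤ) {l : List Bool} {e : ℕ} (he : e < l.length) :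
    weightedWt w (flipAt l e) = weightedWt w l + (1 - 2 * bit l e) * w e := by
  have hterm (i : ℕ) : w i * bit (flipAt l e) i
      = w i * bit l i + if i = e then (1 - 2 * bit l e) * w e else 0 := by
    rw [bit_flipAt he]; split_ifs with h <;> [subst h; skip] <;> ring
  rw [weightedWt, weightedWt, flipAt, List.length_set, ← flipAt]
  simp only [hterm, sum_add_distrib, sum_ite_eq', mem_range, he, if_true]

theorem weightedWt_sub_of_delSub_eq (w : ℕ → ℤ) {x y : List Bool} {n dx dy ex ey : ℕ}
    (hx : x.length = n) (hy : y.length = n) (hdd : dx ≤ dy) (hdy : dy < n)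
    (hex : ex < n) (hey : ey < n) (heq : delSub x dx ex = delSub y dy ey) :
    weightedWt w y - weightedWt w x
      = (1 - 2 * bit x ex) * w ex - (1 - 2 * bit y ey) * w ey
        + (bit (flipAt y ey) dy - bit (flipAt x ex) dx) * w dy
        - ∑ j ∈ Ico dx dy, (w (j + 1) - w j) * (bit (delSub x dx ex) j - bit (flipAt x ex) dx) := by
  have hx' : (flipAt x ex).length = n := by rw [flipAt, List.length_set, hx]
  have hy' : (flipAt y ey).length = n := by rw [flipAt, List.length_set, hy]
  have hX := weightedWt_eq_eraseIdx w (show dx < (flipAt x ex).length by omega)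
  have hY := weightedWt_eq_eraseIdx w (show dy < (flipAt y ey).length by omega)
  rw [weightedWt_flipAt w (hx ▸ hex)] at hX
  rw [weightedWt_flipAt w (hy ▸ hey)] at hY
  rw [eraseIdx_flipAt, hx', ← sum_Ico_consecutive _ hdd (by omega : dy ≤ n - 1)] at hX
  rw [eraseIdx_flipAt, hy', ← heq] at hY
  simp only [mul_sub, sum_sub_distrib, ← sum_mul, sum_Ico_sub w hdd]
  linear_combination hY - hX

theorem count_true_eq_weightedWt (l : List Bool) :
    (l.count true : ℤ) = weightedWt (fun _ => 1) l := by
  induction l with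
  | nil => simp [weightedWt]
  | cons b t ih =>
    rw [weightedWt, List.length_cons, sum_range_succ', List.count_cons, Nat.cast_add, ih]
    cases b <;> simp [weightedWt, bit]

theorem vtSyn_eq_weightedWt (l : List Bool) :
    (vtSyn l : ℤ) = weightedWt (fun i => i + 1) l := by
  rw [vtSyn, weightedWt]
  push_cast
  exact sum_congr rfl fun i _ => by unfold bit; split_ifs <;> simp

theorem two_mul_vtSyn2_eq_weightedWt (l : List Bool) :
    2 * (vtSyn2 l : ℤ) = weightedWt (fun i => (i + 1) * (i + 2)) l := by
  rw [vtSyn2, weightedWt, Nat.cast_sum, mul_sum]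
  refine sum_congr rfl fun i _ => ?_
  have h : 2 * ((i + 1) * (i + 2) / 2) = (i + 1) * (i + 2) :=
    Nat.two_mul_div_two_of_even (Nat.even_mul_succ_self (i + 1))
  unfold bit
  split_ifs
  · push_cast [mul_one]; exact_mod_cast h
  · simp

theorem sum_Ico_mul_bounds {u : ℕ → ℤ} (hu : ∀ j, u j = 0 ∨ u j = 1) {c d : ℕ} (hcd : c ≤ d) :
    0 ≤ ∑ j ∈ Ico c d, u j ∧ ∑ j ∈ Ico c d, u j ≤ d - c ∧
    (∑ j ∈ Ico c d, u j) * (2 * c + ∑ j ∈ Ico c d, u j + 3)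
      ≤ 2 * ∑ j ∈ Ico c d, ((j : ℤ) + 2) * u j ∧
    2 * ∑ j ∈ Ico c d, ((j : ℤ) + 2) * u j
      ≤ (∑ j ∈ Ico c d, u j) * (2 * d - ∑ j ∈ Ico c d, u j + 3) := by
  induction d, hcd using Nat.le_induction with
  | base => simp
  | succ d hcd ih =>
    obtain ⟨h0, h1, h2, h3⟩ := ih
    rw [sum_Ico_succ_top hcd, sum_Ico_succ_top hcd]
    push_cast
    rcases hu d with hd | hd <;> rw [hd] <;> refine ⟨?_, ?_, ?_, ?_⟩ <;> nlinarith

theorem eq_or_le_of_sum_Ico_eq {u : ℕ → ℤ} (hu : ∀ j, u j = 0 ∨ u j = 1) {c d : ℕ} {p q : ℤ}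
    (hcd : c ≤ d) (hS : ∑ j ∈ Ico c d, u j = q - p)
    (hU : 2 * ∑ j ∈ Ico c d, ((j : ℤ) + 2) * u j = (q - p) * (p + q + 3)) :
    (p = q ∧ ∀ j ∈ Ico c d, u j = 0) ∨ (c ≤ p ∧ p < q ∧ q ≤ d) := by
  obtain ⟨h0, -, hlo, hhi⟩ := sum_Ico_mul_bounds hu hcd
  rw [hU, hS] at hlo hhi
  rw [hS] at h0
  rcases h0.eq_or_lt with h | h
  · refine Or.inl ⟨by linarith, fun j hj => ?_⟩
    refine (sum_eq_zero_iff_of_nonneg fun j _ => ?_).1 (by linarith) j hj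
    rcases hu j with h | h <;> simp [h]
  · exact Or.inr ⟨by linarith [le_of_mul_le_mul_left hlo h], by linarith,
      by linarith [le_of_mul_le_mul_left hhi h]⟩

theorem mem_Icc_or_eq_of_sum_Ico_eq {z : ℕ → ℤ} (hz : ∀ j, z j = 0 ∨ z j = 1) {a f : ℤ}
    (ha : a = 0 ∨ a = 1) (hf : f = 1 ∨ f = -1) {dx dy ex ey : ℕ} (hdd : dx ≤ dy)
    (h1 : f * (ex - ey) = ∑ j ∈ Ico dx dy, (z j - a))
    (h2 : f * ((ex + 1) * (ex + 2) - (ey + 1) * (ey + 2))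
      = ∑ j ∈ Ico dx dy, 2 * ((j : ℤ) + 2) * (z j - a)) :
    (ex = ey ∧ ∀ j ∈ Ico dx dy, z j = a) ∨ (dx ≤ ex ∧ ex ≤ dy ∧ dx ≤ ey ∧ ey ≤ dy) := by
  -- Complementing when `a = 1` turns both sums into sums of a 0/1 sequence `u`.
  set u : ℕ → ℤ := fun j => (1 - 2 * a) * (z j - a) with hu_def
  have hu (j : ℕ) : u j = 0 ∨ u j = 1 := by
    rcases ha with rfl | rfl <;> rcases hz j with h | h <;> simp [hu_def, h]
  have hza (j : ℕ) (hj : u j = 0) : z j = a := by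
    rcases ha with rfl | rfl <;> simp only [hu_def] at hj <;> linarith
  have hS : ∑ j ∈ Ico dx dy, u j = (1 - 2 * a) * f * (ex - ey) := by
    rw [← mul_sum, mul_assoc, h1]
  have hU : 2 * ∑ j ∈ Ico dx dy, ((j : ℤ) + 2) * u j
      = (1 - 2 * a) * f * (ex - ey) * (ey + ex + 3) := by
    have : 2 * ∑ j ∈ Ico dx dy, ((j : ℤ) + 2) * u j
        = (1 - 2 * a) * ∑ j ∈ Ico dx dy, 2 * ((j : ℤ) + 2) * (z j - a) := by
      rw [mul_sum, mul_sum]; exact sum_congr rfl fun j _ => by ring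
    rw [this, ← h2]; ring
  have hg : (1 - 2 * a) * f = 1 ∨ (1 - 2 * a) * f = -1 := by
    rcases ha with rfl | rfl <;> rcases hf with rfl | rfl <;> norm_num
  rcases hg with hg | hg <;> rw [hg] at hS hU
  · rcases eq_or_le_of_sum_Ico_eq hu hdd (p := ey) (q := ex) (by rw [hS]; ring) (by rw [hU]; ring)
      with ⟨hpq, hzero⟩ | ⟨hp, hpq, hq⟩
    · exact Or.inl ⟨by exact_mod_cast hpq.symm, fun j hj => hza j (hzero j hj)⟩
    · exact Or.inr (by omega)
  · rcases eq_or_le_of_sum_Ico_eq hu hdd (p := ex) (q := ey) (by rw [hS]; ring) (by rw [hU]; ring)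
      with ⟨hpq, hzero⟩ | ⟨hp, hpq, hq⟩
    · exact Or.inl ⟨by exact_mod_cast hpq, fun j hj => hza j (hzero j hj)⟩
    · exact Or.inr (by omega)

theorem abs_sum_mul_sub_le {z c : ℕ → ℤ} (hz : ∀ j, z j = 0 ∨ z j = 1) {a : ℤ}
    (ha : a = 0 ∨ a = 1) (hc : ∀ j, 0 ≤ c j) (s : Finset ℕ) :
    |∑ j ∈ s, c j * (z j - a)| ≤ ∑ j ∈ s, c j := by
  refine (abs_sum_le_sum_abs _ _).trans (sum_le_sum fun j _ => ?_)
  rw [abs_mul, abs_of_nonneg (hc j)]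
  refine mul_le_of_le_one_right (hc j) ?_
  rcases ha with rfl | rfl <;> rcases hz j with h | h <;> simp [h]

theorem eq_of_dvd_of_monotone {w : ℕ → ℤ} (hw : Monotone w) {z : ℕ → ℤ}
    (hz : ∀ j, z j = 0 ∨ z j = 1) {a f m : ℤ} (ha : a = 0 ∨ a = 1) (hf : f = 1 ∨ f = -1)
    {n dx dy ex ey : ℕ} (hdd : dx ≤ dy) (hdy : dy < n) (hex : ex < n) (hey : ey < n)
    (hm : 2 * (w (n - 1) - w 0) < m)
    (h : m ∣ f * (w ex - w ey) - ∑ j ∈ Ico dx dy, (w (j + 1) - w j) * (z j - a)) :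
    f * (w ex - w ey) = ∑ j ∈ Ico dx dy, (w (j + 1) - w j) * (z j - a) := by
  refine sub_eq_zero.1 (Int.eq_zero_of_abs_lt_dvd h ?_)
  have hf1 : |f| = 1 := by rcases hf with rfl | rfl <;> simp
  have hsum := abs_sum_mul_sub_le hz ha (fun j => sub_nonneg.2 (hw (Nat.le_succ j))) (Ico dx dy)
  rw [sum_Ico_sub w hdd] at hsum
  have hexy : |w ex - w ey| ≤ w (n - 1) - w 0 := abs_sub_le_iff.2
    ⟨by linarith [hw (Nat.zero_le ey), hw (by omega : ex ≤ n - 1)],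
      by linarith [hw (Nat.zero_le ex), hw (by omega : ey ≤ n - 1)]⟩
  calc |f * (w ex - w ey) - ∑ j ∈ Ico dx dy, (w (j + 1) - w j) * (z j - a)|
      ≤ |w ex - w ey| + (w dy - w dx) := by
        rw [← one_mul |w ex - w ey|, ← hf1, ← abs_mul]; exact (abs_sub _ _).trans (by linarith)
    _ < m := by linarith [hw (Nat.zero_le dx), hw (by omega : dy ≤ n - 1)]

theorem mem_Icc_of_delSub_eq_of_le {n : ℕ} {x y : List Bool} (hx : x.length = n)
    (hy : y.length = n) (hne : x ≠ y) (h0 : x.count true ≡ y.count true [MOD 4])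
    (h1 : vtSyn x ≡ vtSyn y [MOD 2 * n]) (h2 : vtSyn2 x ≡ vtSyn2 y [MOD 2 * n ^ 2])
    {dx dy ex ey : ℕ} (hdd : dx ≤ dy) (hdy : dy < n) (hex : ex < n) (hey : ey < n)
    (heq : delSub x dx ex = delSub y dy ey) :
    dx ≤ ex ∧ ex ≤ dy ∧ dx ≤ ey ∧ ey ≤ dy := by
  have hdiff (w : ℕ → ℤ) := weightedWt_sub_of_delSub_eq w hx hy hdd hdy hex hey heq
  set a := bit (flipAt x ex) dx
  set z := bit (delSub x dx ex)
  have hz := bit_eq_zero_or_one (delSub x dx ex)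
  have ha := bit_eq_zero_or_one (flipAt x ex) dx
  obtain ⟨hxy, hab⟩ : bit y ey = bit x ex ∧ bit (flipAt y ey) dy = a := by
    have h := Nat.modEq_iff_dvd.1 h0
    rw [count_true_eq_weightedWt, count_true_eq_weightedWt, hdiff] at h
    simp only [sub_self, zero_mul, sum_const_zero, sub_zero, mul_one] at h
    rcases bit_eq_zero_or_one x ex with h1 | h1 <;> rcases bit_eq_zero_or_one y ey with h2 | h2 <;>
      rcases bit_eq_zero_or_one (flipAt y ey) dy with h3 | h3 <;> omega
  set f := 1 - 2 * bit x ex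
  have hf : f = 1 ∨ f = -1 := by rcases bit_eq_zero_or_one x ex with h | h <;> simp [f, h]
  have hdvd {w : ℕ → ℤ} {m : ℤ} (h : m ∣ weightedWt w y - weightedWt w x) :
      m ∣ f * (w ex - w ey) - ∑ j ∈ Ico dx dy, (w (j + 1) - w j) * (z j - a) := by
    rwa [hdiff, hxy, hab, sub_self, zero_mul, add_zero, ← mul_sub] at h
  have hd1 : (2 * n : ℤ) ∣ weightedWt (fun i => i + 1) y - weightedWt (fun i => i + 1) x := by
    rw [← vtSyn_eq_weightedWt, ← vtSyn_eq_weightedWt]; exact_mod_cast Nat.modEq_iff_dvd.1 h1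
  have hd2 : (4 * n ^ 2 : ℤ) ∣ weightedWt (fun i => (i + 1) * (i + 2)) y
      - weightedWt (fun i => (i + 1) * (i + 2)) x := by
    rw [← two_mul_vtSyn2_eq_weightedWt, ← two_mul_vtSyn2_eq_weightedWt, ← mul_sub,
      show (4 * n ^ 2 : ℤ) = 2 * (2 * n ^ 2) by ring]
    exact mul_dvd_mul_left 2 (by exact_mod_cast Nat.modEq_iff_dvd.1 h2)
  have hn : ((n - 1 : ℕ) : ℤ) = n - 1 := by omega
  have hE1 := eq_of_dvd_of_monotone (fun i j hij => by simpa using hij) hz ha hf hdd hdy hex hey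
    (by push_cast; omega) (hdvd hd1)
  have hE2 := eq_of_dvd_of_monotone (fun i j hij => by gcongr) hz ha hf hdd hdy hex hey
    (by rw [hn]; nlinarith) (hdvd hd2)
  rcases mem_Icc_or_eq_of_sum_Ico_eq hz ha hf hdd (by simpa using hE1)
      (hE2.trans (sum_congr rfl fun j _ => by push_cast; ring)) with ⟨rfl, hrun⟩ | h
  · exact absurd (eq_of_delSub_eq (hx.trans hy.symm) hdd heq hab.symm hrun) hne
  · exact h

theorem stmt17_general (n : ℕ) (s0 s1 s2 : ℕ)
    (x y : List Bool) (hx : x.length = n) (hy : y.length = n) (hne : x ≠ y)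
    (hx0 : x.count true % 4 = s0) (hy0 : y.count true % 4 = s0)
    (hx1 : vtSyn x % (2 * n) = s1) (hy1 : vtSyn y % (2 * n) = s1)
    (hx2 : vtSyn2 x % (2 * n ^ 2) = s2) (hy2 : vtSyn2 y % (2 * n ^ 2) = s2)
    (dx dy ex ey : ℕ) (hdx : dx < n) (hdy : dy < n) (hex : ex < n) (hey : ey < n)
    (heq : delSub x dx ex = delSub y dy ey) :
    min dx dy ≤ ex ∧ ex ≤ max dx dy ∧ min dx dy ≤ ey ∧ ey ≤ max dx dy := by
  have h0 : x.count true ≡ y.count true [MOD 4] := hx0.trans hy0.symm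
  have h1 : vtSyn x ≡ vtSyn y [MOD 2 * n] := hx1.trans hy1.symm
  have h2 : vtSyn2 x ≡ vtSyn2 y [MOD 2 * n ^ 2] := hx2.trans hy2.symm
  rcases le_total dx dy with hdd | hdd
  · have := mem_Icc_of_delSub_eq_of_le hx hy hne h0 h1 h2 hdd hdy hex hey heq
    omega
  · have := mem_Icc_of_delSub_eq_of_le hy hx hne.symm h0.symm h1.symm h2.symm hdd hdx hey hex
      heq.symm
    omega

/-- For distinct codewords `x, y` of the list-decodable code `C_L` of Song et al.,
if `x(d_x, e_x) = y(d_y, e_y)` then `e_x, e_y ∈ [min(d_x,d_y), max(d_x,d_y)]`. -/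
theorem stmt17 (n : ℕ) (hn : 1 ≤ n) (s0 s1 s2 : ℕ)
    (hs0 : s0 ≤ 3) (hs1 : s1 ≤ 2 * n - 1) (hs2 : s2 ≤ 2 * n ^ 2 - 1)
    (x y : List Bool) (hx : x.length = n) (hy : y.length = n) (hne : x ≠ y)
    (hx0 : x.count true % 4 = s0) (hy0 : y.count true % 4 = s0)
    (hx1 : vtSyn x % (2 * n) = s1) (hy1 : vtSyn y % (2 * n) = s1)
    (hx2 : vtSyn2 x % (2 * n ^ 2) = s2) (hy2 : vtSyn2 y % (2 * n ^ 2) = s2)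
    (dx dy ex ey : ℕ) (hdx : dx < n) (hdy : dy < n) (hex : ex < n) (hey : ey < n)
    (heq : delSub x dx ex = delSub y dy ey) :
    min dx dy ≤ ex ∧ ex ≤ max dx dy ∧ min dx dy ≤ ey ∧ ey ≤ max dx dy :=
  stmt17_general n s0 s1 s2 x y hx hy hne hx0 hy0 hx1 hy1 hx2 hy2 dx dy ex ey hdx hdy hex hey heq
end
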